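/- arXiv:2510.04088 — 5 statements merged into one kernel-verified Lean document; each statement's English description precedes it below -/
import Mathlib

section
/- There exists a discounted MDP with finite state space S and finite action space A, a policy π, a data distribution μ over S×A with full support, a feature map φ : S×A → ℝ whose one-dimensional linear span F = {θ·φ : θ ∈ ℝ} contains Q^π (realizability), and an initialization f_0 ∈ F, such that the exact population fitted-Q iterates f_k = argmin_{f ∈ F} E_{(s,a)~μ}[(f(s,a) − (T^π f_{k−1})(s,a))²] are uniquely defined for every k and satisfy sup_{(s,a)} |f_k(s,a)| → ∞ as k → ∞ (divergence of fitted-Q evaluation despite infinite data, exact optimization, and realizability). -/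
open scoped BigOperators

noncomputable section

/-- The policy-specific Bellman operator. -/
def bellmanOp {S A : Type*} [Fintype S] [Fintype A] (P : S → A → S → ℝ)
    (R : S → A → ℝ) (γ : ℝ) (pol : S → A → ℝ) (f : S → A → ℝ) : S → A → ℝ :=
  fun s a => R s a + γ * ∑ s', P s a s' * ∑ a', pol s' a' * f s' a'

/-- The population fitted-Q regression loss with data distribution `μ`:
`L(g) = E_{(s,a)~μ}[(g(s,a) − (T^π f_prev)(s,a))²]` (infinite data,
so the regression target is the exact Bellman backup of `f_prev`). -/
def fqLoss {S A : Type*} [Fintype S] [Fintype A] (P : S → A → S → ℝ)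
    (R : S → A → ℝ) (γ : ℝ) (pol : S → A → ℝ) (μ : S → A → ℝ)
    (g fprev : S → A → ℝ) : ℝ :=
  ∑ s, ∑ a, μ s a * (g s a - bellmanOp P R γ pol fprev s a) ^ 2

lemma fq_loss_calc (k : ℕ) (g : Fin 2 → Fin 1 → ℝ) (θ : ℝ)
    (hg : ∀ s a, g s a = θ * (if s = 0 then (1:ℝ) else 2)) :
    fqLoss (fun _ _ s' => if s' = 1 then (1:ℝ) else 0) (fun _ _ => 0) (9/10) (fun _ _ => 1)
      (fun _ _ => 1/2) g (fun s _ => (27/25)^k * (if s = 0 then 1 else 2)) =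
    1/2 * (θ - 9/5 * (27/25)^k)^2 + 1/2 * (2*θ - 9/5*(27/25)^k)^2 := by
  simp [fqLoss, bellmanOp, Fin.sum_univ_two, Fin.sum_univ_one, hg]
  ring

/-- **Divergence of fitted-Q evaluation despite infinite data, exact optimization,
and realizability.** There exist a discounted MDP with finite state and action
spaces, a policy `π`, a fully-supported data distribution `μ`, a feature map `φ`
whose 1-dimensional linear span contains `Q^π` (the fixed point of `T^π`), and an
initialization `f_0` in the span, such that the exact population fitted-Q iterates
(each the *unique* minimizer of the population regression loss over the span)
satisfy `sup_{(s,a)} |f_k(s,a)| → ∞`. -/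
theorem fittedQ_divergence_despite_realizability :
    ∃ (nS nA : ℕ), 1 ≤ nS ∧ 1 ≤ nA ∧
    ∃ (P : Fin nS → Fin nA → Fin nS → ℝ) (R : Fin nS → Fin nA → ℝ)
      (Rmax γ : ℝ) (d0 : Fin nS → ℝ) (pol : Fin nS → Fin nA → ℝ)
      (μ : Fin nS → Fin nA → ℝ) (φ : Fin nS → Fin nA → ℝ)
      (Qπ : Fin nS → Fin nA → ℝ) (θstar : ℝ)
      (f : ℕ → Fin nS → Fin nA → ℝ),
      -- a bona fide discounted MDP
      (∀ s a s', 0 ≤ P s a s') ∧ (∀ s a, ∑ s', P s a s' = 1) ∧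
      (0 ≤ Rmax) ∧ (∀ s a, 0 ≤ R s a ∧ R s a ≤ Rmax) ∧
      (0 ≤ γ ∧ γ < 1) ∧
      (∀ s, 0 ≤ d0 s) ∧ (∑ s, d0 s = 1) ∧
      -- a bona fide policy
      (∀ s a, 0 ≤ pol s a) ∧ (∀ s, ∑ a, pol s a = 1) ∧
      -- data distribution with full support
      (∀ s a, 0 < μ s a) ∧ (∑ s, ∑ a, μ s a = 1) ∧
      -- Q^π : fixed point of the Bellman operator
      (∀ s a, Qπ s a = bellmanOp P R γ pol Qπ s a) ∧
      -- realizability: Q^π lies in the 1-dimensional span of φ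
      (∀ s a, Qπ s a = θstar * φ s a) ∧
      -- initialization in the span
      (∃ θ0 : ℝ, ∀ s a, f 0 s a = θ0 * φ s a) ∧
      -- each iterate is the unique population-loss minimizer over the span
      (∀ k : ℕ,
        (∃ θ : ℝ, ∀ s a, f (k + 1) s a = θ * φ s a) ∧
        (∀ g : Fin nS → Fin nA → ℝ, (∃ θ : ℝ, ∀ s a, g s a = θ * φ s a) →
          fqLoss P R γ pol μ (f (k + 1)) (f k) ≤ fqLoss P R γ pol μ g (f k) ∧
          (fqLoss P R γ pol μ g (f k) = fqLoss P R γ pol μ (f (k + 1)) (f k) →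
            g = f (k + 1)))) ∧
      -- divergence: the sup-norm of the iterates tends to infinity
      Filter.Tendsto (fun k => ⨆ p : Fin nS × Fin nA, |f k p.1 p.2|)
        Filter.atTop Filter.atTop := by
  refine ⟨2, 1, by norm_num, le_refl 1,
    (fun _ _ s' => if s' = 1 then 1 else 0), (fun _ _ => 0), 0, 9/10,
    (fun s => if s = 0 then 1 else 0), (fun _ _ => 1), (fun _ _ => 1/2),
    (fun s _ => if s = 0 then 1 else 2), (fun _ _ => 0), 0,
    (fun k s _ => (27/25)^k * (if s = 0 then 1 else 2)),
    ?_, ?_, le_refl 0, fun s a => ⟨le_refl 0, le_refl 0⟩, ⟨by norm_num, by norm_num⟩,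
    ?_, ?_, fun s a => zero_le_one, ?_, fun s a => by norm_num, ?_,
    ?_, fun s a => by ring, ⟨1, fun s a => by simp⟩, ?_, ?_⟩
  · intro s a s'; dsimp only; split <;> norm_num
  · intro s a; simp [Fin.sum_univ_two]
  · intro s; dsimp only; split <;> norm_num
  · simp [Fin.sum_univ_two]
  · simp [Fin.sum_univ_one]
  · simp [Fin.sum_univ_two, Fin.sum_univ_one]
  · intro s a; simp [bellmanOp]
  · intro k
    constructor
    · exact ⟨(27/25)^(k+1), fun s a => by ring⟩
    · rintro g ⟨θ, hg⟩
      have hf : ∀ s a, (fun s (_ : Fin 1) => (27/25)^(k+1) * (if s = 0 then (1:ℝ) else 2)) s a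
          = (27/25)^(k+1) * (if s = 0 then (1:ℝ) else 2) := fun s a => rfl
      have hLg := fq_loss_calc k g θ hg
      have hLf := fq_loss_calc k (fun s _ => (27/25)^(k+1) * (if s = 0 then 1 else 2))
        ((27/25)^(k+1)) (fun s a => rfl)
      have key : ∀ t : ℝ, 1/2 * (t - 9/5 * (27/25)^k)^2 + 1/2 * (2*t - 9/5*(27/25)^k)^2
          - (1/2 * ((27/25)^(k+1) - 9/5 * (27/25)^k)^2
             + 1/2 * (2*(27/25)^(k+1) - 9/5*(27/25)^k)^2) = 5/2 * (t - (27/25)^(k+1))^2 := by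
        intro t; rw [pow_succ]; ring
      constructor
      · rw [hLg, hLf]
        nlinarith [key θ, sq_nonneg (θ - (27/25)^(k+1))]
      · intro heq
        rw [hLg, hLf] at heq
        have hθ : θ = (27/25)^(k+1) := by nlinarith [key θ, sq_nonneg (θ - (27/25)^(k+1))]
        funext s a
        rw [hg, hθ]
  · have hmono : ∀ k : ℕ, ((27:ℝ)/25)^k ≤ ⨆ p : Fin 2 × Fin 1,
        |(27/25:ℝ)^k * (if p.1 = 0 then (1:ℝ) else 2)| := by
      intro k
      have hb : BddAbove (Set.range fun p : Fin 2 × Fin 1 =>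
          |(27/25:ℝ)^k * (if p.1 = 0 then (1:ℝ) else 2)|) := Set.Finite.bddAbove (Set.finite_range _)
      have := le_ciSup hb ((0 : Fin 2), (0 : Fin 1))
      calc ((27:ℝ)/25)^k = |(27/25:ℝ)^k * (if (0:Fin 2) = 0 then (1:ℝ) else 2)| := by
            rw [if_pos rfl, mul_one, abs_of_nonneg (by positivity)]
        _ ≤ _ := this
    refine Filter.tendsto_atTop_mono hmono ?_
    exact tendsto_pow_atTop_atTop_of_one_lt (by norm_num)
end
end

section
/- (Generalized performance-difference lemma.) For any function f : S×A → ℝ and any policies π, π' : S → Δ(A), J(π') − J(π) = (1/(1−γ)) · ( E_{s~d^{π'}}[f(s,π') − f(s,π)] + E_{(s,a)~d^{π'}}[(T^π f)(s,a) − f(s,a)] + E_{(s,a)~d^{π}}[f(s,a) − (T^π f)(s,a)] ), where in the first term s is drawn from the state marginal of d^{π'}. -/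
open scoped BigOperators

noncomputable section

/-- `occt P pol d0 t s a = Pr_π[s_t = s, a_t = a]`, the time-`t` state-action
distribution of the stationary policy `pol` started from `d0`. -/
def occt {S A : Type*} [Fintype S] [Fintype A] (P : S → A → S → ℝ)
    (pol : S → A → ℝ) (d0 : S → ℝ) : ℕ → S → A → ℝ
  | 0 => fun s a => d0 s * pol s a
  | (t + 1) => fun s' a' => (∑ s, ∑ a, occt P pol d0 t s a * P s a s') * pol s' a'

/-- Discounted state-action occupancy `d^π = (1-γ) Σ_t γ^t d_t^π`. -/
def docc {S A : Type*} [Fintype S] [Fintype A] (P : S → A → S → ℝ)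
    (pol : S → A → ℝ) (d0 : S → ℝ) (γ : ℝ) (s : S) (a : A) : ℝ :=
  (1 - γ) * ∑' t : ℕ, γ ^ t * occt P pol d0 t s a

/-- Expected discounted return `J(π) = E_π[Σ_t γ^t r_t]`. -/
def Jret {S A : Type*} [Fintype S] [Fintype A] (P : S → A → S → ℝ)
    (R : S → A → ℝ) (γ : ℝ) (pol : S → A → ℝ) (d0 : S → ℝ) : ℝ :=
  ∑' t : ℕ, γ ^ t * ∑ s, ∑ a, occt P pol d0 t s a * R s a

/-- `J_f(π) = E_{s ~ d0}[f(s,π)]`. -/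
def Jf {S A : Type*} [Fintype S] [Fintype A] (d0 : S → ℝ) (pol : S → A → ℝ)
    (f : S → A → ℝ) : ℝ :=
  ∑ s, d0 s * ∑ a, pol s a * f s a


/-! Fix the evaluation policy `π` and an occupancy policy `μ`. Since the time-`t` occupancy of
`μ` is proportional to `μ` in each state and is pushed forward by `P` to the state marginal at
time `t + 1`,
`E_{d_t^μ}[T^π f − f] = E_{d_t^μ}[R] + γ E_{d_{t+1}^μ}[f(·,π)] − E_{d_t^μ}[f(·,μ)]`.
Summing against `γ^t` telescopes to
`E_{d^μ}[T^π f − f] = (1 − γ)(J(μ) − E_{d_0}[f(·,π)]) − E_{d^μ}[f(·,μ) − f(·,π)]`,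
and subtracting the instances `μ = π'` and `μ = π` eliminates `E_{d_0}[f(·,π)]`. -/
section Occupancy

variable {S A : Type*} [Fintype S] [Fintype A] {P : S → A → S → ℝ} {pol : S → A → ℝ}
  {d0 : S → ℝ}

theorem occt_eq_mul_policy (t : ℕ) :
    ∃ c : S → ℝ, ∀ s a, occt P pol d0 t s a = c s * pol s a := by
  cases t with
  | zero => exact ⟨d0, fun _ _ => rfl⟩
  | succ t => exact ⟨_, fun _ _ => rfl⟩

theorem sum_occt_mul_eq_policy_average (hpol1 : ∀ s, ∑ a, pol s a = 1)
    (f : S → A → ℝ) (t : ℕ) :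
    ∑ s, ∑ a, occt P pol d0 t s a * f s a
      = ∑ s, ∑ a, occt P pol d0 t s a * ∑ a', pol s a' * f s a' := by
  obtain ⟨c, hc⟩ := occt_eq_mul_policy (P := P) (pol := pol) (d0 := d0) t
  refine Finset.sum_congr rfl fun s _ => ?_
  simp only [hc, ← Finset.sum_mul, mul_assoc, ← Finset.mul_sum, hpol1, one_mul]

theorem sum_occt_succ_mul (hpol1 : ∀ s, ∑ a, pol s a = 1) (h : S → ℝ) (t : ℕ) :
    ∑ s, ∑ a, occt P pol d0 (t + 1) s a * h s
      = ∑ s, ∑ a, occt P pol d0 t s a * ∑ s', P s a s' * h s' := by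
  have hrow : ∀ s', ∑ a', occt P pol d0 (t + 1) s' a' * h s'
      = (∑ s, ∑ a, occt P pol d0 t s a * P s a s') * h s' := fun s' => by
    simp only [occt, mul_right_comm _ (pol _ _), ← Finset.mul_sum, hpol1, mul_one]
  simp only [hrow, Finset.sum_mul, Finset.mul_sum]
  rw [Finset.sum_comm]
  refine Finset.sum_congr rfl fun s _ => ?_
  rw [Finset.sum_comm]
  simp only [mul_assoc]

theorem sum_abs_occt_le (hP0 : ∀ s a s', 0 ≤ P s a s') (hP1 : ∀ s a, ∑ s', P s a s' = 1)
    (hpol0 : ∀ s a, 0 ≤ pol s a) (hpol1 : ∀ s, ∑ a, pol s a = 1) (t : ℕ) :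
    ∑ s, ∑ a, |occt P pol d0 t s a| ≤ ∑ s, |d0 s| := by
  induction t with
  | zero =>
    simp only [occt, abs_mul, abs_of_nonneg (hpol0 _ _), ← Finset.mul_sum, hpol1, mul_one,
      le_refl]
  | succ t ih =>
    have hstep : ∀ s', |∑ s, ∑ a, occt P pol d0 t s a * P s a s'|
        ≤ ∑ s, ∑ a, |occt P pol d0 t s a| * P s a s' := fun s' => by
      refine (Finset.abs_sum_le_sum_abs _ _).trans
        (Finset.sum_le_sum fun s _ => (Finset.abs_sum_le_sum_abs _ _).trans_eq ?_)
      simp only [abs_mul, abs_of_nonneg (hP0 _ _ _)]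
    calc ∑ s', ∑ a', |occt P pol d0 (t + 1) s' a'|
        ≤ ∑ s', ∑ a', (∑ s, ∑ a, |occt P pol d0 t s a| * P s a s') * pol s' a' := by
          simp only [occt, abs_mul, abs_of_nonneg (hpol0 _ _)]
          exact Finset.sum_le_sum fun s' _ => Finset.sum_le_sum fun a' _ =>
            mul_le_mul_of_nonneg_right (hstep s') (hpol0 s' a')
      _ = ∑ s, ∑ a, |occt P pol d0 t s a| := by
          simp only [← Finset.mul_sum, hpol1, mul_one]
          rw [Finset.sum_comm]
          refine Finset.sum_congr rfl fun s _ => ?_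
          rw [Finset.sum_comm]
          simp only [← Finset.mul_sum, hP1, mul_one]
      _ ≤ ∑ s, |d0 s| := ih

theorem hasSum_geometric_mul_occt {γ : ℝ} (hγ0 : 0 ≤ γ) (hγ1 : γ < 1)
    (hP0 : ∀ s a s', 0 ≤ P s a s') (hP1 : ∀ s a, ∑ s', P s a s' = 1)
    (hpol0 : ∀ s a, 0 ≤ pol s a) (hpol1 : ∀ s, ∑ a, pol s a = 1) (s : S) (a : A) :
    HasSum (fun t => γ ^ t * occt P pol d0 t s a) ((1 - γ)⁻¹ * docc P pol d0 γ s a) := by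
  have hbound : ∀ t, |occt P pol d0 t s a| ≤ ∑ s, |d0 s| := fun t =>
    calc |occt P pol d0 t s a| ≤ ∑ a, |occt P pol d0 t s a| :=
          Finset.single_le_sum (f := fun a => |occt P pol d0 t s a|) (fun _ _ => abs_nonneg _)
            (Finset.mem_univ a)
      _ ≤ ∑ s, ∑ a, |occt P pol d0 t s a| :=
          Finset.single_le_sum (f := fun s => ∑ a, |occt P pol d0 t s a|)
            (fun _ _ => Finset.sum_nonneg fun _ _ => abs_nonneg _) (Finset.mem_univ s)
      _ ≤ ∑ s, |d0 s| := sum_abs_occt_le hP0 hP1 hpol0 hpol1 t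
  have hsum : Summable (fun t => γ ^ t * occt P pol d0 t s a) := by
    refine Summable.of_norm_bounded
      ((summable_geometric_of_lt_one hγ0 hγ1).mul_left (∑ s, |d0 s|)) fun t => ?_
    rw [norm_mul, norm_pow, Real.norm_of_nonneg hγ0, Real.norm_eq_abs, mul_comm]
    exact mul_le_mul_of_nonneg_right (hbound t) (pow_nonneg hγ0 t)
  rw [docc, ← mul_assoc, inv_mul_cancel₀ (sub_ne_zero.2 hγ1.ne'), one_mul]
  exact hsum.hasSum

theorem hasSum_discounted_sum_occt_mul {γ : ℝ} (hγ0 : 0 ≤ γ) (hγ1 : γ < 1)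
    (hP0 : ∀ s a s', 0 ≤ P s a s') (hP1 : ∀ s a, ∑ s', P s a s' = 1)
    (hpol0 : ∀ s a, 0 ≤ pol s a) (hpol1 : ∀ s, ∑ a, pol s a = 1) (g : S → A → ℝ) :
    HasSum (fun t => γ ^ t * ∑ s, ∑ a, occt P pol d0 t s a * g s a)
      ((1 - γ)⁻¹ * ∑ s, ∑ a, docc P pol d0 γ s a * g s a) := by
  have h := hasSum_sum (s := Finset.univ) fun s _ => hasSum_sum (s := Finset.univ) fun a _ =>
    (hasSum_geometric_mul_occt (d0 := d0) hγ0 hγ1 hP0 hP1 hpol0 hpol1 s a).mul_right (g s a)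
  simp only [Finset.mul_sum, mul_assoc] at h ⊢
  exact h

end Occupancy

theorem sum_occt_mul_bellman_residual {S A : Type*} [Fintype S] [Fintype A]
    {P : S → A → S → ℝ} {γ : ℝ} (R : S → A → ℝ) (d0 : S → ℝ) (pol pol' : S → A → ℝ)
    (hpol'1 : ∀ s, ∑ a, pol' s a = 1) (f : S → A → ℝ) (t : ℕ) :
    ∑ s, ∑ a, occt P pol' d0 t s a * (bellmanOp P R γ pol f s a - f s a)
      = ∑ s, ∑ a, occt P pol' d0 t s a * R s a
        + γ * ∑ s, ∑ a, occt P pol' d0 (t + 1) s a * ∑ a', pol s a' * f s a'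
        - ∑ s, ∑ a, occt P pol' d0 t s a * ∑ a', pol' s a' * f s a' := by
  rw [sum_occt_succ_mul hpol'1, ← sum_occt_mul_eq_policy_average hpol'1]
  simp only [bellmanOp, mul_sub, mul_add, Finset.sum_sub_distrib, Finset.sum_add_distrib,
    Finset.mul_sum, mul_left_comm γ]

theorem sum_docc_mul_bellman_residual {S A : Type*} [Fintype S] [Fintype A]
    {P : S → A → S → ℝ} {γ : ℝ} (R : S → A → ℝ) (d0 : S → ℝ) (pol pol' : S → A → ℝ)
    (hP0 : ∀ s a s', 0 ≤ P s a s') (hP1 : ∀ s a, ∑ s', P s a s' = 1)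
    (hγ0 : 0 ≤ γ) (hγ1 : γ < 1)
    (hpol'0 : ∀ s a, 0 ≤ pol' s a) (hpol'1 : ∀ s, ∑ a, pol' s a = 1) (f : S → A → ℝ) :
    ∑ s, ∑ a, docc P pol' d0 γ s a * (bellmanOp P R γ pol f s a - f s a)
      = (1 - γ) * (Jret P R γ pol' d0 - Jf d0 pol f)
        - ∑ s, (∑ a, docc P pol' d0 γ s a) *
            ((∑ a, pol' s a * f s a) - ∑ a, pol s a * f s a) := by
  set Fpol : S → ℝ := fun s => ∑ a, pol s a * f s a
  set Fpol' : S → ℝ := fun s => ∑ a, pol' s a * f s a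
  set E : ℕ → (S → A → ℝ) → ℝ := fun t g => ∑ s, ∑ a, occt P pol' d0 t s a * g s a
  have hasSum_E := hasSum_discounted_sum_occt_mul (d0 := d0) hγ0 hγ1 hP0 hP1 hpol'0 hpol'1
  have hJ : HasSum (fun t => γ ^ t * E t R) (Jret P R γ pol' d0) := (hasSum_E R).summable.hasSum
  have hnext := (hasSum_nat_add_iff' 1).mpr (hasSum_E fun s _ => Fpol s)
  have hstep : ∀ t, γ ^ t * E t (fun s a => bellmanOp P R γ pol f s a - f s a)
      = γ ^ t * E t R + γ ^ (t + 1) * E (t + 1) (fun s _ => Fpol s)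
        - γ ^ t * E t (fun s _ => Fpol' s) := fun t => by
    simp only [E]
    rw [sum_occt_mul_bellman_residual R d0 pol pol' hpol'1 f t]
    ring
  have htelescope := (hasSum_E fun s a => bellmanOp P R γ pol f s a - f s a).unique
    (((hJ.add hnext).sub (hasSum_E fun s _ => Fpol' s)).congr_fun hstep)
  have hinit : ∑ i ∈ Finset.range 1, γ ^ i * E i (fun s _ => Fpol s) = Jf d0 pol f := by
    simp only [Finset.sum_range_one, pow_zero, one_mul, E, occt, mul_assoc, ← Finset.mul_sum,
      ← Finset.sum_mul, hpol'1]
    rfl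
  have hsplit : ∑ s, (∑ a, docc P pol' d0 γ s a) * (Fpol' s - Fpol s)
      = ∑ s, ∑ a, docc P pol' d0 γ s a * Fpol' s - ∑ s, ∑ a, docc P pol' d0 γ s a * Fpol s := by
    simp only [Finset.sum_mul, mul_sub, Finset.sum_sub_distrib]
  have hγ : 1 - γ ≠ 0 := sub_ne_zero.2 hγ1.ne'
  rw [hinit, inv_mul_eq_iff_eq_mul₀ hγ] at htelescope
  rw [htelescope, hsplit]
  field_simp
  ring

theorem generalized_performance_difference_general {S A : Type*} [Fintype S] [Fintype A]
    (P : S → A → S → ℝ) (R : S → A → ℝ) (γ : ℝ) (d0 : S → ℝ)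
    (pol pol' : S → A → ℝ)
    (hP0 : ∀ s a s', 0 ≤ P s a s') (hP1 : ∀ s a, ∑ s', P s a s' = 1)
    (hγ0 : 0 ≤ γ) (hγ1 : γ < 1)
    (hpol0 : ∀ s a, 0 ≤ pol s a) (hpol1 : ∀ s, ∑ a, pol s a = 1)
    (hpol'0 : ∀ s a, 0 ≤ pol' s a) (hpol'1 : ∀ s, ∑ a, pol' s a = 1)
    (f : S → A → ℝ) :
    Jret P R γ pol' d0 - Jret P R γ pol d0 =
      (1 / (1 - γ)) *
        ((∑ s, (∑ a, docc P pol' d0 γ s a) *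
            ((∑ a, pol' s a * f s a) - (∑ a, pol s a * f s a)))
          + (∑ s, ∑ a, docc P pol' d0 γ s a * (bellmanOp P R γ pol f s a - f s a))
          + (∑ s, ∑ a, docc P pol d0 γ s a * (f s a - bellmanOp P R γ pol f s a))) := by
  have hres' := sum_docc_mul_bellman_residual R d0 pol pol' hP0 hP1 hγ0 hγ1 hpol'0 hpol'1 f
  have hres := sum_docc_mul_bellman_residual R d0 pol pol hP0 hP1 hγ0 hγ1 hpol0 hpol1 f
  simp only [sub_self, mul_zero, Finset.sum_const_zero, sub_zero] at hres
  have hneg : ∑ s, ∑ a, docc P pol d0 γ s a * (f s a - bellmanOp P R γ pol f s a)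
      = -∑ s, ∑ a, docc P pol d0 γ s a * (bellmanOp P R γ pol f s a - f s a) := by
    simp only [← neg_sub (bellmanOp P R γ pol f _ _), mul_neg, Finset.sum_neg_distrib]
  rw [hneg, hres', hres]
  field_simp [sub_ne_zero.2 hγ1.ne']
  ring

/-- **Generalized performance-difference lemma.** For any `f : S×A → ℝ` and policies
`π, π'`:  `J(π') − J(π) = (1/(1−γ)) ( E_{s~d^{π'}}[f(s,π') − f(s,π)]
+ E_{d^{π'}}[T^π f − f] + E_{d^π}[f − T^π f] )`, where in the first term `s` is drawn
from the state marginal of `d^{π'}`. -/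
theorem generalized_performance_difference {S A : Type*} [Fintype S] [Fintype A]
    (P : S → A → S → ℝ) (R : S → A → ℝ) (Rmax γ : ℝ) (d0 : S → ℝ)
    (pol pol' : S → A → ℝ)
    (hP0 : ∀ s a s', 0 ≤ P s a s') (hP1 : ∀ s a, ∑ s', P s a s' = 1)
    (hR : ∀ s a, 0 ≤ R s a ∧ R s a ≤ Rmax)
    (hγ0 : 0 ≤ γ) (hγ1 : γ < 1)
    (hd00 : ∀ s, 0 ≤ d0 s) (hd01 : ∑ s, d0 s = 1)
    (hpol0 : ∀ s a, 0 ≤ pol s a) (hpol1 : ∀ s, ∑ a, pol s a = 1)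
    (hpol'0 : ∀ s a, 0 ≤ pol' s a) (hpol'1 : ∀ s, ∑ a, pol' s a = 1)
    (f : S → A → ℝ) :
    Jret P R γ pol' d0 - Jret P R γ pol d0 =
      (1 / (1 - γ)) *
        ((∑ s, (∑ a, docc P pol' d0 γ s a) *
            ((∑ a, pol' s a * f s a) - (∑ a, pol s a * f s a)))
          + (∑ s, ∑ a, docc P pol' d0 γ s a * (bellmanOp P R γ pol f s a - f s a))
          + (∑ s, ∑ a, docc P pol d0 γ s a * (f s a - bellmanOp P R γ pol f s a))) :=
  generalized_performance_difference_general P R γ d0 pol pol' hP0 hP1 hγ0 hγ1 hpol0 hpol1 hpol'0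
    hpol'1 f
end
end

section
/- (Bellman flow error decomposition.) Let D be the distribution of tuples (s,a,r,s') with (s,a) ~ d^D for a distribution d^D on S×A, r = R(s,a), and s' ~ P(·|s,a). For w : S×A → ℝ define J_w(π) = E_D[w(s,a)·r]/(1−γ). Then for any policy π and any w : S×A → ℝ, J(π) − J_w(π) = E_{s~d_0}[Q^π(s,π)] + E_D[w(s,a)·(γ Q^π(s',π) − Q^π(s,a))]/(1−γ). -/
open scoped BigOperators

noncomputable section

section Aux

variable {S A : Type*} [Fintype S] [Fintype A]

lemma occt_nonneg (P : S → A → S → ℝ) (pol : S → A → ℝ) (d0 : S → ℝ)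
    (hP0 : ∀ s a s', 0 ≤ P s a s') (hd00 : ∀ s, 0 ≤ d0 s)
    (hpol0 : ∀ s a, 0 ≤ pol s a) :
    ∀ t s a, 0 ≤ occt P pol d0 t s a := by
  intro t
  induction t with
  | zero => intro s a; exact mul_nonneg (hd00 s) (hpol0 s a)
  | succ t ih =>
    intro s a
    refine mul_nonneg ?_ (hpol0 s a)
    exact Finset.sum_nonneg fun s' _ => Finset.sum_nonneg fun a' _ =>
      mul_nonneg (ih s' a') (hP0 s' a' s)

lemma occt_sum (P : S → A → S → ℝ) (pol : S → A → ℝ) (d0 : S → ℝ)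
    (hP1 : ∀ s a, ∑ s', P s a s' = 1) (hd01 : ∑ s, d0 s = 1)
    (hpol1 : ∀ s, ∑ a, pol s a = 1) :
    ∀ t, ∑ s, ∑ a, occt P pol d0 t s a = 1 := by
  intro t
  induction t with
  | zero =>
    simp only [occt]
    calc ∑ s, ∑ a, d0 s * pol s a = ∑ s, d0 s * ∑ a, pol s a := by
            exact Finset.sum_congr rfl fun s _ => (Finset.mul_sum _ _ _).symm
      _ = 1 := by simp [hpol1, hd01]
  | succ t ih =>
    simp only [occt]
    calc ∑ s', ∑ a', (∑ s, ∑ a, occt P pol d0 t s a * P s a s') * pol s' a'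
        = ∑ s', (∑ s, ∑ a, occt P pol d0 t s a * P s a s') * ∑ a', pol s' a' := by
          exact Finset.sum_congr rfl fun s' _ => (Finset.mul_sum _ _ _).symm
      _ = ∑ s', ∑ s, ∑ a, occt P pol d0 t s a * P s a s' := by simp [hpol1]
      _ = ∑ s, ∑ a, occt P pol d0 t s a * ∑ s', P s a s' := by
          rw [Finset.sum_comm]
          refine Finset.sum_congr rfl fun s _ => ?_
          rw [Finset.sum_comm]
          exact Finset.sum_congr rfl fun a _ => (Finset.mul_sum _ _ _).symm
      _ = 1 := by simp [hP1, ih]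

end Aux

/-- **Bellman flow error decomposition.** With `J_w(π) = E_D[w(s,a)·r]/(1−γ)` where
`(s,a) ~ d^D` and `r = R(s,a)`: for any policy `π` and any `w : S×A → ℝ`,
`J(π) − J_w(π) = E_{s~d_0}[Q^π(s,π)] + E_D[w(s,a)(γ Q^π(s',π) − Q^π(s,a))]/(1−γ)`.
Here `Q^π` is characterized as the (unique) fixed point of `T^π`. -/
theorem bellman_flow_error_decomposition {S A : Type*} [Fintype S] [Fintype A]
    (P : S → A → S → ℝ) (R : S → A → ℝ) (Rmax γ : ℝ) (d0 : S → ℝ)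
    (pol : S → A → ℝ)
    (hP0 : ∀ s a s', 0 ≤ P s a s') (hP1 : ∀ s a, ∑ s', P s a s' = 1)
    (hR : ∀ s a, 0 ≤ R s a ∧ R s a ≤ Rmax)
    (hγ0 : 0 ≤ γ) (hγ1 : γ < 1)
    (hd00 : ∀ s, 0 ≤ d0 s) (hd01 : ∑ s, d0 s = 1)
    (hpol0 : ∀ s a, 0 ≤ pol s a) (hpol1 : ∀ s, ∑ a, pol s a = 1)
    (dD : S → A → ℝ)
    (hdD0 : ∀ s a, 0 ≤ dD s a) (hdD1 : ∑ s, ∑ a, dD s a = 1)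
    (Qπ : S → A → ℝ) (hQ : ∀ s a, Qπ s a = bellmanOp P R γ pol Qπ s a)
    (w : S → A → ℝ) :
    Jret P R γ pol d0 - (∑ s, ∑ a, dD s a * (w s a * R s a)) / (1 - γ) =
      (∑ s, d0 s * ∑ a, pol s a * Qπ s a)
        + (∑ s, ∑ a, dD s a * (w s a *
            (γ * ∑ s', P s a s' * (∑ a', pol s' a' * Qπ s' a') - Qπ s a))) / (1 - γ) := by
  -- Step 1: simplify the w-term on the RHS using the Bellman equation.
  have hBell : ∀ s a,
      γ * ∑ s', P s a s' * (∑ a', pol s' a' * Qπ s' a') - Qπ s a = -(R s a) := by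
    intro s a
    have := hQ s a
    simp only [bellmanOp] at this
    linarith
  have hwterm : (∑ s, ∑ a, dD s a * (w s a *
      (γ * ∑ s', P s a s' * (∑ a', pol s' a' * Qπ s' a') - Qπ s a))) =
      -(∑ s, ∑ a, dD s a * (w s a * R s a)) := by
    rw [← Finset.sum_neg_distrib]
    refine Finset.sum_congr rfl fun s _ => ?_
    rw [← Finset.sum_neg_distrib]
    refine Finset.sum_congr rfl fun a _ => ?_
    rw [hBell]; ring
  rw [hwterm]
  -- Step 2: J(π) = E_{d0}[Q^π(s,π)].
  have key : Jret P R γ pol d0 = ∑ s, d0 s * ∑ a, pol s a * Qπ s a := by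
    set V : ℕ → ℝ := fun t => ∑ s, ∑ a, occt P pol d0 t s a * Qπ s a with hV
    set r : ℕ → ℝ := fun t => ∑ s, ∑ a, occt P pol d0 t s a * R s a with hr
    have hrec : ∀ t, V t = r t + γ * V (t + 1) := by
      intro t
      have hV1 : V (t + 1) = ∑ s, ∑ a, occt P pol d0 t s a *
          ∑ s', P s a s' * ∑ a', pol s' a' * Qπ s' a' := by
        simp only [hV, occt]
        calc ∑ s', ∑ a', (∑ s, ∑ a, occt P pol d0 t s a * P s a s') * pol s' a' * Qπ s' a'
            = ∑ s', (∑ s, ∑ a, occt P pol d0 t s a * P s a s') *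
                ∑ a', pol s' a' * Qπ s' a' := by
              refine Finset.sum_congr rfl fun s' _ => ?_
              rw [Finset.mul_sum]
              exact Finset.sum_congr rfl fun a' _ => by ring
          _ = ∑ s', ∑ s, ∑ a, occt P pol d0 t s a * P s a s' *
                ∑ a', pol s' a' * Qπ s' a' := by
              refine Finset.sum_congr rfl fun s' _ => ?_
              rw [Finset.sum_mul]
              exact Finset.sum_congr rfl fun s _ => Finset.sum_mul _ _ _
          _ = ∑ s, ∑ a, ∑ s', occt P pol d0 t s a * P s a s' *
                ∑ a', pol s' a' * Qπ s' a' := by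
              rw [Finset.sum_comm]
              exact Finset.sum_congr rfl fun s _ => Finset.sum_comm
          _ = _ := by
              refine Finset.sum_congr rfl fun s _ => Finset.sum_congr rfl fun a _ => ?_
              rw [Finset.mul_sum]
              exact Finset.sum_congr rfl fun s' _ => by ring
      calc V t = ∑ s, ∑ a, (occt P pol d0 t s a * R s a +
            γ * (occt P pol d0 t s a * ∑ s', P s a s' * ∑ a', pol s' a' * Qπ s' a')) := by
            refine Finset.sum_congr rfl fun s _ => Finset.sum_congr rfl fun a _ => ?_
            rw [hQ s a]
            simp only [bellmanOp]
            ring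
        _ = (∑ s, ∑ a, occt P pol d0 t s a * R s a) +
            ∑ s, ∑ a, γ * (occt P pol d0 t s a *
              ∑ s', P s a s' * ∑ a', pol s' a' * Qπ s' a') := by
            rw [← Finset.sum_add_distrib]
            exact Finset.sum_congr rfl fun s _ => Finset.sum_add_distrib
        _ = r t + γ * V (t + 1) := by
            rw [hr, hV1, Finset.mul_sum]
            congr 1
            exact Finset.sum_congr rfl fun s _ => (Finset.mul_sum _ _ _).symm
    -- bounds
    have hocc0 := occt_nonneg P pol d0 hP0 hd00 hpol0
    have hocc1 := occt_sum P pol d0 hP1 hd01 hpol1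
    have hocc_le1 : ∀ t s a, occt P pol d0 t s a ≤ 1 := by
      intro t s a
      calc occt P pol d0 t s a ≤ ∑ a', occt P pol d0 t s a' :=
            Finset.single_le_sum (fun a' _ => hocc0 t s a') (Finset.mem_univ a)
        _ ≤ ∑ s', ∑ a', occt P pol d0 t s' a' :=
            Finset.single_le_sum (fun s' _ =>
              Finset.sum_nonneg fun a' _ => hocc0 t s' a') (Finset.mem_univ s)
        _ = 1 := hocc1 t
    set M : ℝ := ∑ s, ∑ a, |Qπ s a| with hM
    have hVbound : ∀ t, |V t| ≤ M := by
      intro t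
      calc |V t| ≤ ∑ s, |∑ a, occt P pol d0 t s a * Qπ s a| :=
            Finset.abs_sum_le_sum_abs _ _
        _ ≤ ∑ s, ∑ a, |occt P pol d0 t s a * Qπ s a| :=
            Finset.sum_le_sum fun s _ => Finset.abs_sum_le_sum_abs _ _
        _ ≤ M := by
            rw [hM]
            refine Finset.sum_le_sum fun s _ => Finset.sum_le_sum fun a _ => ?_
            rw [abs_mul, abs_of_nonneg (hocc0 t s a)]
            nlinarith [hocc_le1 t s a, hocc0 t s a, abs_nonneg (Qπ s a)]
    -- reward bounds
    have hS : Nonempty S := by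
      by_contra h
      simp only [not_nonempty_iff] at h
      have : (∑ s : S, d0 s) = 0 := by simp
      rw [hd01] at this; norm_num at this
    obtain ⟨s0⟩ := hS
    have hA : Nonempty A := by
      by_contra h
      simp only [not_nonempty_iff] at h
      have : (∑ a : A, pol s0 a) = 0 := by simp
      rw [hpol1 s0] at this; norm_num at this
    obtain ⟨a0⟩ := hA
    have hRmax : 0 ≤ Rmax := le_trans (hR s0 a0).1 (hR s0 a0).2
    have hrb : ∀ t, |r t| ≤ Rmax := by
      intro t
      rw [abs_of_nonneg]
      · calc r t ≤ ∑ s, ∑ a, occt P pol d0 t s a * Rmax := by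
              refine Finset.sum_le_sum fun s _ => Finset.sum_le_sum fun a _ => ?_
              exact mul_le_mul_of_nonneg_left (hR s a).2 (hocc0 t s a)
          _ = Rmax := by
              simp only [← Finset.sum_mul]
              rw [hocc1 t, one_mul]
      · exact Finset.sum_nonneg fun s _ => Finset.sum_nonneg fun a _ =>
          mul_nonneg (hocc0 t s a) (hR s a).1
    -- summability of γ^t r t
    have hsumm : Summable (fun t => γ ^ t * r t) := by
      refine Summable.of_abs (Summable.of_nonneg_of_le (fun t => abs_nonneg _)
        (fun t => ?_) (Summable.mul_right Rmax (summable_geometric_of_lt_one hγ0 hγ1)))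
      rw [abs_mul, abs_of_nonneg (pow_nonneg hγ0 t)]
      exact mul_le_mul_of_nonneg_left (hrb t) (pow_nonneg hγ0 t)
    -- telescoping partial sums
    have htel : ∀ N, ∑ i ∈ Finset.range N, γ ^ i * r i = V 0 - γ ^ N * V N := by
      intro N
      induction N with
      | zero => simp
      | succ N ih =>
        rw [Finset.sum_range_succ, ih, hrec N]
        ring
    -- limit
    have hlim : Filter.Tendsto (fun N => ∑ i ∈ Finset.range N, γ ^ i * r i)
        Filter.atTop (nhds (V 0)) := by
      simp only [htel]
      have h1 : Filter.Tendsto (fun N : ℕ => γ ^ N * V N) Filter.atTop (nhds 0) := by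
        have hgeo : Filter.Tendsto (fun N : ℕ => γ ^ N * M) Filter.atTop (nhds 0) := by
          have := (tendsto_pow_atTop_nhds_zero_of_lt_one hγ0 hγ1).mul_const M
          simpa using this
        refine squeeze_zero_norm (fun N => ?_) hgeo
        rw [Real.norm_eq_abs, abs_mul, abs_of_nonneg (pow_nonneg hγ0 N)]
        exact mul_le_mul_of_nonneg_left (hVbound N) (pow_nonneg hγ0 N)
      have := Filter.Tendsto.sub (tendsto_const_nhds (x := V 0)) h1
      simpa using this
    have hJV : Jret P R γ pol d0 = V 0 := by
      rw [Jret]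
      exact tendsto_nhds_unique ((Summable.hasSum_iff_tendsto_nat hsumm).mp hsumm.hasSum) hlim
    rw [hJV, hV]
    simp only [occt]
    refine Finset.sum_congr rfl fun s _ => ?_
    rw [Finset.mul_sum]
    refine Finset.sum_congr rfl fun a _ => ?_
    ring
  rw [key]
  ring
end
end

section
/- (Deterministic core of the MQL guarantee.) Let d^D be a distribution on S×A with d^π(s,a) > 0 implying d^D(s,a) > 0, and let W be a set of functions S×A → ℝ containing the marginalized importance weight w^π(s,a) = d^π(s,a)/d^D(s,a) (with w^π(s,a) = 0 when d^π(s,a) = 0). Then for every function f : S×A → ℝ, |J_f(π) − J(π)| ≤ (1/(1−γ)) · max_{w ∈ W} |E_{(s,a)~d^D}[w(s,a)·(f(s,a) − (T^π f)(s,a))]|; moreover the right-hand side is 0 when f = Q^π. -/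
/-!
Write `E_t[g]` (`occtExp t g`) for the expectation of `g` under the time-`t` state-action
distribution `d_t^π`. One step of the dynamics gives `E_t[T^π f] = E_t[R] + γ E_{t+1}[f]`, so the
discounted series `Σ_t γ^t E_t[f - T^π f]` telescopes to
`E_0[f] - Σ_t γ^t E_t[R] = J_f(π) - J(π)`. Exchanging the series with the finite sums turns it
into `(1-γ)⁻¹ E_{d^π}[f - T^π f]`, and the support condition lets us rewrite `d^π = d^D · w^π`
pointwise. The bound is then the term `w = w^π` of the maximum, and for `f = Q^π` every term of
the maximum vanishes.
-/

open scoped BigOperators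

noncomputable section

theorem HasSum.sub_succ {G : Type*} [AddCommGroup G] [TopologicalSpace G]
    [IsTopologicalAddGroup G] {u : ℕ → G} {a : G} (h : HasSum u a) :
    HasSum (fun n => u n - u (n + 1)) (u 0) := by
  have hshift := (hasSum_nat_add_iff' 1).2 h
  simpa using h.sub hshift

namespace MDP

variable {S A : Type*} [Fintype S] [Fintype A]
  (P : S → A → S → ℝ) (R : S → A → ℝ) (γ : ℝ) (d0 : S → ℝ) (pol : S → A → ℝ)

def occtExp (t : ℕ) (g : S → A → ℝ) : ℝ :=
  ∑ s, ∑ a, occt P pol d0 t s a * g s a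

theorem occtExp_zero (f : S → A → ℝ) : occtExp P d0 pol 0 f = Jf d0 pol f := by
  simp only [occtExp, occt, Jf, Finset.mul_sum, mul_assoc]

theorem occtExp_succ (t : ℕ) (f : S → A → ℝ) :
    occtExp P d0 pol (t + 1) f =
      occtExp P d0 pol t (fun s a => ∑ s', P s a s' * ∑ a', pol s' a' * f s' a') := by
  set V : S → ℝ := fun s' => ∑ a', pol s' a' * f s' a'
  calc occtExp P d0 pol (t + 1) f
      = ∑ s', (∑ s, ∑ a, occt P pol d0 t s a * P s a s') * V s' := by
        simp only [occtExp, occt, V, mul_assoc, Finset.mul_sum]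
    _ = ∑ s, ∑ a, ∑ s', occt P pol d0 t s a * (P s a s' * V s') := by
        simp only [Finset.sum_mul, mul_assoc]
        rw [Finset.sum_comm]
        exact Finset.sum_congr rfl fun s _ => Finset.sum_comm
    _ = _ := by simp only [occtExp, ← Finset.mul_sum, V]

theorem occtExp_bellmanOp (t : ℕ) (f : S → A → ℝ) :
    occtExp P d0 pol t (bellmanOp P R γ pol f) =
      occtExp P d0 pol t R + γ * occtExp P d0 pol (t + 1) f := by
  rw [occtExp_succ]
  simp only [occtExp, bellmanOp, mul_add, Finset.sum_add_distrib, Finset.mul_sum,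
    mul_left_comm _ γ]

theorem occtExp_sub (t : ℕ) (f g : S → A → ℝ) :
    occtExp P d0 pol t (fun s a => f s a - g s a) =
      occtExp P d0 pol t f - occtExp P d0 pol t g := by
  simp only [occtExp, mul_sub, Finset.sum_sub_distrib]

theorem occtExp_one (hP1 : ∀ s a, ∑ s', P s a s' = 1) (hd01 : ∑ s, d0 s = 1)
    (hpol1 : ∀ s, ∑ a, pol s a = 1) (t : ℕ) : occtExp P d0 pol t (fun _ _ => 1) = 1 := by
  induction t with
  | zero => simp [occtExp_zero, Jf, hpol1, hd01]
  | succ t ih => simpa [occtExp_succ, hpol1, hP1] using ih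

theorem occt_mem_Icc (hP0 : ∀ s a s', 0 ≤ P s a s') (hP1 : ∀ s a, ∑ s', P s a s' = 1)
    (hd00 : ∀ s, 0 ≤ d0 s) (hd01 : ∑ s, d0 s = 1)
    (hpol0 : ∀ s a, 0 ≤ pol s a) (hpol1 : ∀ s, ∑ a, pol s a = 1) (t : ℕ) (s : S) (a : A) :
    occt P pol d0 t s a ∈ Set.Icc 0 1 := by
  have hnonneg : ∀ t s a, 0 ≤ occt P pol d0 t s a := by
    intro t
    induction t with
    | zero => exact fun s a => mul_nonneg (hd00 s) (hpol0 s a)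
    | succ t ih =>
      exact fun s' a' => mul_nonneg (Finset.sum_nonneg fun s _ => Finset.sum_nonneg fun a _ =>
        mul_nonneg (ih s a) (hP0 s a s')) (hpol0 s' a')
  refine ⟨hnonneg t s a, ?_⟩
  calc occt P pol d0 t s a ≤ ∑ a', occt P pol d0 t s a' :=
        Finset.single_le_sum (fun a' _ => hnonneg t s a') (Finset.mem_univ a)
    _ ≤ ∑ s', ∑ a', occt P pol d0 t s' a' :=
        Finset.single_le_sum (fun s' _ => Finset.sum_nonneg fun a' _ => hnonneg t s' a')
          (Finset.mem_univ s)
    _ = 1 := by simpa [occtExp] using occtExp_one P d0 pol hP1 hd01 hpol1 t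

variable {P d0 pol γ}

theorem docc_nonneg (hγ0 : 0 ≤ γ) (hγ1 : γ < 1)
    (hocc : ∀ t s a, occt P pol d0 t s a ∈ Set.Icc 0 1) (s : S) (a : A) :
    0 ≤ docc P pol d0 γ s a :=
  mul_nonneg (sub_nonneg.2 hγ1.le)
    (tsum_nonneg fun t => mul_nonneg (pow_nonneg hγ0 t) (hocc t s a).1)

theorem hasSum_discounted_occt (hγ0 : 0 ≤ γ) (hγ1 : γ < 1)
    (hocc : ∀ t s a, occt P pol d0 t s a ∈ Set.Icc 0 1) (s : S) (a : A) :
    HasSum (fun t => γ ^ t * occt P pol d0 t s a) ((1 - γ)⁻¹ * docc P pol d0 γ s a) := by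
  have hsumm : Summable (fun t => γ ^ t * occt P pol d0 t s a) :=
    Summable.of_nonneg_of_le (fun t => mul_nonneg (pow_nonneg hγ0 t) (hocc t s a).1)
      (fun t => mul_le_of_le_one_right (pow_nonneg hγ0 t) (hocc t s a).2)
      (summable_geometric_of_lt_one hγ0 hγ1)
  rw [docc, inv_mul_cancel_left₀ (sub_pos.2 hγ1).ne']
  exact hsumm.hasSum

theorem hasSum_discounted_occtExp (hγ0 : 0 ≤ γ) (hγ1 : γ < 1)
    (hocc : ∀ t s a, occt P pol d0 t s a ∈ Set.Icc 0 1) (g : S → A → ℝ) :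
    HasSum (fun t => γ ^ t * occtExp P d0 pol t g)
      ((1 - γ)⁻¹ * ∑ s, ∑ a, docc P pol d0 γ s a * g s a) := by
  have h := hasSum_sum (s := Finset.univ) fun s _ => hasSum_sum (s := Finset.univ) fun a _ =>
    (hasSum_discounted_occt hγ0 hγ1 hocc s a).mul_right (g s a)
  simpa only [occtExp, Finset.mul_sum, mul_assoc] using h

theorem Jf_sub_Jret_eq (hγ0 : 0 ≤ γ) (hγ1 : γ < 1)
    (hocc : ∀ t s a, occt P pol d0 t s a ∈ Set.Icc 0 1) (f : S → A → ℝ) :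
    Jf d0 pol f - Jret P R γ pol d0 =
      (1 - γ)⁻¹ * ∑ s, ∑ a, docc P pol d0 γ s a * (f s a - bellmanOp P R γ pol f s a) := by
  set u : ℕ → ℝ := fun t => γ ^ t * occtExp P d0 pol t f
  have htelescope : HasSum (fun t => u t - u (t + 1)) (Jf d0 pol f) := by
    simpa [u, occtExp_zero] using (hasSum_discounted_occtExp hγ0 hγ1 hocc f).sub_succ
  have hreturn : HasSum (fun t => γ ^ t * occtExp P d0 pol t R) (Jret P R γ pol d0) :=
    (hasSum_discounted_occtExp hγ0 hγ1 hocc R).summable.hasSum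
  have hgap :
      (fun t => γ ^ t * occtExp P d0 pol t (fun s a => f s a - bellmanOp P R γ pol f s a)) =
        fun t => (u t - u (t + 1)) - γ ^ t * occtExp P d0 pol t R := by
    funext t
    rw [occtExp_sub, occtExp_bellmanOp]
    ring
  refine HasSum.unique ?_ (hasSum_discounted_occtExp hγ0 hγ1 hocc _)
  rw [hgap]
  exact htelescope.sub hreturn

end MDP

open MDP in
theorem mql_deterministic_core_general {S A : Type*} [Fintype S] [Fintype A]
    (P : S → A → S → ℝ) (R : S → A → ℝ) (γ : ℝ) (d0 : S → ℝ)
    (pol : S → A → ℝ)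
    (hP0 : ∀ s a s', 0 ≤ P s a s') (hP1 : ∀ s a, ∑ s', P s a s' = 1)
    (hγ0 : 0 ≤ γ) (hγ1 : γ < 1)
    (hd00 : ∀ s, 0 ≤ d0 s) (hd01 : ∑ s, d0 s = 1)
    (hpol0 : ∀ s a, 0 ≤ pol s a) (hpol1 : ∀ s, ∑ a, pol s a = 1)
    (dD : S → A → ℝ)
    (hsupp : ∀ s a, 0 < docc P pol d0 γ s a → 0 < dD s a)
    (Qπ : S → A → ℝ) (hQ : ∀ s a, Qπ s a = bellmanOp P R γ pol Qπ s a)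
    (W : Finset (S → A → ℝ))
    (hwπ : (fun s a => docc P pol d0 γ s a / dD s a) ∈ W) :
    (∀ f : S → A → ℝ,
        |Jf d0 pol f - Jret P R γ pol d0| ≤
          (1 / (1 - γ)) *
            W.sup' ⟨_, hwπ⟩ (fun w =>
              |∑ s, ∑ a, dD s a * (w s a * (f s a - bellmanOp P R γ pol f s a))|))
      ∧ W.sup' ⟨_, hwπ⟩ (fun w =>
          |∑ s, ∑ a, dD s a * (w s a * (Qπ s a - bellmanOp P R γ pol Qπ s a))|) = 0 := by
  have hocc := occt_mem_Icc P d0 pol hP0 hP1 hd00 hd01 hpol0 hpol1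
  have hweight : ∀ s a, dD s a * (docc P pol d0 γ s a / dD s a) = docc P pol d0 γ s a :=
    fun s a => mul_div_cancel_of_imp' fun hdD => le_antisymm
      (not_lt.1 fun hpos => (hsupp s a hpos).ne' hdD) (docc_nonneg hγ0 hγ1 hocc s a)
  refine ⟨fun f => ?_, ?_⟩
  · have hscale : 0 < 1 / (1 - γ) := one_div_pos.2 (sub_pos.2 hγ1)
    calc |Jf d0 pol f - Jret P R γ pol d0|
        = 1 / (1 - γ) * |∑ s, ∑ a, dD s a *
            (docc P pol d0 γ s a / dD s a * (f s a - bellmanOp P R γ pol f s a))| := by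
          simp only [Jf_sub_Jret_eq R hγ0 hγ1 hocc, abs_mul, ← mul_assoc, hweight, one_div,
            abs_of_pos (inv_pos.2 (sub_pos.2 hγ1))]
      _ ≤ _ := mul_le_mul_of_nonneg_left (Finset.le_sup' (fun w =>
            |∑ s, ∑ a, dD s a * (w s a * (f s a - bellmanOp P R γ pol f s a))|) hwπ) hscale.le
  · simp only [fun s a => sub_eq_zero.2 (hQ s a), mul_zero, Finset.sum_const_zero, abs_zero]
    exact Finset.sup'_const _ _

/-- **Deterministic core of the MQL guarantee.** Let `W` be a (finite) class of
weight functions containing the marginalized importance weight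
`w^π = d^π/d^D` (with the convention `0/0 = 0`). Then for every `f`,
`|J_f(π) − J(π)| ≤ (1/(1−γ)) max_{w ∈ W} |E_{d^D}[w·(f − T^π f)]|`,
and the right-hand side max is `0` when `f = Q^π` (the fixed point of `T^π`). -/
theorem mql_deterministic_core {S A : Type*} [Fintype S] [Fintype A]
    (P : S → A → S → ℝ) (R : S → A → ℝ) (Rmax γ : ℝ) (d0 : S → ℝ)
    (pol : S → A → ℝ)
    (hP0 : ∀ s a s', 0 ≤ P s a s') (hP1 : ∀ s a, ∑ s', P s a s' = 1)
    (hR : ∀ s a, 0 ≤ R s a ∧ R s a ≤ Rmax)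
    (hγ0 : 0 ≤ γ) (hγ1 : γ < 1)
    (hd00 : ∀ s, 0 ≤ d0 s) (hd01 : ∑ s, d0 s = 1)
    (hpol0 : ∀ s a, 0 ≤ pol s a) (hpol1 : ∀ s, ∑ a, pol s a = 1)
    (dD : S → A → ℝ)
    (hdD0 : ∀ s a, 0 ≤ dD s a) (hdD1 : ∑ s, ∑ a, dD s a = 1)
    (hsupp : ∀ s a, 0 < docc P pol d0 γ s a → 0 < dD s a)
    (Qπ : S → A → ℝ) (hQ : ∀ s a, Qπ s a = bellmanOp P R γ pol Qπ s a)
    (W : Finset (S → A → ℝ))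
    (hwπ : (fun s a => docc P pol d0 γ s a / dD s a) ∈ W) :
    (∀ f : S → A → ℝ,
        |Jf d0 pol f - Jret P R γ pol d0| ≤
          (1 / (1 - γ)) *
            W.sup' ⟨_, hwπ⟩ (fun w =>
              |∑ s, ∑ a, dD s a * (w s a * (f s a - bellmanOp P R γ pol f s a))|))
      ∧ W.sup' ⟨_, hwπ⟩ (fun w =>
          |∑ s, ∑ a, dD s a * (w s a * (Qπ s a - bellmanOp P R γ pol Qπ s a))|) = 0 :=
  mql_deterministic_core_general P R γ d0 pol hP0 hP1 hγ0 hγ1 hd00 hd01 hpol0 hpol1 dD hsupp Qπ hQ W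
    hwπ
end
end

section
/- (Contraction of the Bellman operator under an invariant distribution.) Let π be a policy and let ν ∈ Δ(S×A) be invariant with respect to π, i.e., for all (s',a'), Σ_{(s,a)} ν(s,a) P(s'|s,a) π(a'|s') = ν(s',a'). Then for all functions f, f' : S×A → ℝ, ||T^π f − T^π f'||_{2,ν} ≤ γ ||f − f'||_{2,ν}, where ||g||_{2,ν}² = E_{(s,a)~ν}[g(s,a)²]. -/
open scoped BigOperators

noncomputable section

lemma jensen_sq {ι : Type*} [Fintype ι] (w x : ι → ℝ) (hw : ∀ i, 0 ≤ w i)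
    (h1 : ∑ i, w i = 1) : (∑ i, w i * x i) ^ 2 ≤ ∑ i, w i * x i ^ 2 := by
  have key := Finset.sum_mul_sq_le_sq_mul_sq Finset.univ (fun i => Real.sqrt (w i))
    (fun i => Real.sqrt (w i) * x i)
  have e1 : ∀ i, Real.sqrt (w i) * (Real.sqrt (w i) * x i) = w i * x i := by
    intro i; rw [← mul_assoc, Real.mul_self_sqrt (hw i)]
  have e2 : ∀ i, Real.sqrt (w i) ^ 2 = w i := fun i => Real.sq_sqrt (hw i)
  have e3 : ∀ i, (Real.sqrt (w i) * x i) ^ 2 = w i * x i ^ 2 := by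
    intro i; rw [mul_pow, e2]
  simp only [e1, e2, e3] at key
  calc (∑ i, w i * x i) ^ 2 ≤ (∑ i, w i) * ∑ i, w i * x i ^ 2 := key
    _ = ∑ i, w i * x i ^ 2 := by rw [h1, one_mul]

/-- **Contraction of the Bellman operator under an invariant distribution.**
If `ν ∈ Δ(S×A)` is invariant w.r.t. `π`, i.e.
`(Σ_{(s,a)} ν(s,a) P(s'|s,a)) π(a'|s') = ν(s',a')` for all `(s',a')`, then
`‖T^π f − T^π f'‖_{2,ν} ≤ γ ‖f − f'‖_{2,ν}` for all `f, f'`. -/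
theorem bellman_contraction_invariant {S A : Type*} [Fintype S] [Fintype A]
    (P : S → A → S → ℝ) (R : S → A → ℝ) (Rmax γ : ℝ) (pol : S → A → ℝ)
    (hP0 : ∀ s a s', 0 ≤ P s a s') (hP1 : ∀ s a, ∑ s', P s a s' = 1)
    (hR : ∀ s a, 0 ≤ R s a ∧ R s a ≤ Rmax)
    (hγ0 : 0 ≤ γ) (hγ1 : γ < 1)
    (hpol0 : ∀ s a, 0 ≤ pol s a) (hpol1 : ∀ s, ∑ a, pol s a = 1)
    (ν : S → A → ℝ)
    (hν0 : ∀ s a, 0 ≤ ν s a) (hν1 : ∑ s, ∑ a, ν s a = 1)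
    (hinv : ∀ s' a', (∑ s, ∑ a, ν s a * P s a s') * pol s' a' = ν s' a')
    (f f' : S → A → ℝ) :
    Real.sqrt (∑ s, ∑ a, ν s a *
        (bellmanOp P R γ pol f s a - bellmanOp P R γ pol f' s a) ^ 2) ≤
      γ * Real.sqrt (∑ s, ∑ a, ν s a * (f s a - f' s a) ^ 2) := by
  set g : S → A → ℝ := fun s a => f s a - f' s a with hg
  -- difference of Bellman operators
  have hdiff : ∀ s a, bellmanOp P R γ pol f s a - bellmanOp P R γ pol f' s a
      = γ * ∑ p : S × A, (P s a p.1 * pol p.1 p.2) * g p.1 p.2 := by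
    intro s a
    simp only [bellmanOp]
    rw [Fintype.sum_prod_type]
    have : (∑ s', P s a s' * ∑ a', pol s' a' * f s' a') -
           (∑ s', P s a s' * ∑ a', pol s' a' * f' s' a')
         = ∑ s', ∑ a', P s a s' * pol s' a' * g s' a' := by
      rw [← Finset.sum_sub_distrib]
      apply Finset.sum_congr rfl
      intro s' _
      rw [← mul_sub, ← Finset.sum_sub_distrib, Finset.mul_sum]
      apply Finset.sum_congr rfl
      intro a' _
      simp only [hg]; ring
    calc R s a + γ * (∑ s', P s a s' * ∑ a', pol s' a' * f s' a') -
          (R s a + γ * ∑ s', P s a s' * ∑ a', pol s' a' * f' s' a')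
        = γ * ((∑ s', P s a s' * ∑ a', pol s' a' * f s' a') -
            ∑ s', P s a s' * ∑ a', pol s' a' * f' s' a') := by ring
      _ = γ * ∑ s', ∑ a', P s a s' * pol s' a' * g s' a' := by rw [this]
  -- weights sum to one
  have hwsum : ∀ s a, ∑ p : S × A, P s a p.1 * pol p.1 p.2 = 1 := by
    intro s a
    rw [Fintype.sum_prod_type]
    have : ∀ s', ∑ a', P s a s' * pol s' a' = P s a s' := by
      intro s'; rw [← Finset.mul_sum, hpol1, mul_one]
    simp only [this, hP1]
  -- pointwise Jensen bound
  have hpt : ∀ s a, (bellmanOp P R γ pol f s a - bellmanOp P R γ pol f' s a) ^ 2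
      ≤ γ ^ 2 * ∑ p : S × A, (P s a p.1 * pol p.1 p.2) * g p.1 p.2 ^ 2 := by
    intro s a
    rw [hdiff, mul_pow]
    apply mul_le_mul_of_nonneg_left _ (sq_nonneg γ)
    exact jensen_sq _ _ (fun p => mul_nonneg (hP0 _ _ _) (hpol0 _ _)) (hwsum s a)
  -- main sum bound
  have hsum : ∑ s, ∑ a, ν s a *
        (bellmanOp P R γ pol f s a - bellmanOp P R γ pol f' s a) ^ 2
      ≤ γ ^ 2 * ∑ s, ∑ a, ν s a * g s a ^ 2 := by
    calc ∑ s, ∑ a, ν s a *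
          (bellmanOp P R γ pol f s a - bellmanOp P R γ pol f' s a) ^ 2
        ≤ ∑ s, ∑ a, ν s a *
            (γ ^ 2 * ∑ p : S × A, (P s a p.1 * pol p.1 p.2) * g p.1 p.2 ^ 2) := by
          apply Finset.sum_le_sum; intro s _
          apply Finset.sum_le_sum; intro a _
          exact mul_le_mul_of_nonneg_left (hpt s a) (hν0 s a)
      _ = ∑ s, ∑ a, ∑ p : S × A,
            γ ^ 2 * (ν s a * P s a p.1 * pol p.1 p.2 * g p.1 p.2 ^ 2) := by
          apply Finset.sum_congr rfl; intro s _
          apply Finset.sum_congr rfl; intro a _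
          rw [Finset.mul_sum, Finset.mul_sum]
          apply Finset.sum_congr rfl; intro p _; ring
      _ = ∑ s, ∑ p : S × A, ∑ a,
            γ ^ 2 * (ν s a * P s a p.1 * pol p.1 p.2 * g p.1 p.2 ^ 2) :=
          Finset.sum_congr rfl fun s _ => Finset.sum_comm
      _ = ∑ p : S × A, ∑ s, ∑ a,
            γ ^ 2 * (ν s a * P s a p.1 * pol p.1 p.2 * g p.1 p.2 ^ 2) :=
          Finset.sum_comm
      _ = γ ^ 2 * ∑ p : S × A,
            (∑ s, ∑ a, ν s a * P s a p.1) * pol p.1 p.2 * g p.1 p.2 ^ 2 := by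
          rw [Finset.mul_sum]
          apply Finset.sum_congr rfl; intro p _
          have : ∑ s, ∑ a, γ ^ 2 * (ν s a * P s a p.1 * pol p.1 p.2 * g p.1 p.2 ^ 2)
              = (∑ s, ∑ a, ν s a * P s a p.1) * (γ ^ 2 * pol p.1 p.2 * g p.1 p.2 ^ 2) := by
            rw [Finset.sum_mul]
            apply Finset.sum_congr rfl; intro s _
            rw [Finset.sum_mul]
            apply Finset.sum_congr rfl; intro a _; ring
          rw [this]; ring
      _ = γ ^ 2 * ∑ p : S × A, ν p.1 p.2 * g p.1 p.2 ^ 2 := by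
          congr 1
          apply Finset.sum_congr rfl
          intro p _
          rw [hinv p.1 p.2]
      _ = γ ^ 2 * ∑ s, ∑ a, ν s a * g s a ^ 2 := by
          rw [Fintype.sum_prod_type]
  -- conclude via sqrt
  have h2 := Real.sqrt_le_sqrt hsum
  rwa [Real.sqrt_mul (sq_nonneg γ), Real.sqrt_sq hγ0] at h2
end
end
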